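/- arXiv:2502.00967 — 2 statements merged into one kernel-verified Lean document; each statement's English description precedes it below -/
import Mathlib

section
/- In a partially additive field, there are no zero divisors: for elements a, b, the product a × b is a zero element if and only if a is a zero element or b is a zero element. -/
/-- A partially additive field: partial addition (modeled via `Option`, `none` = undefined),
total multiplication, per-element zeros, etc. -/
structure PAF (Q : Type*) where
  add : Q → Q → Option Q
  mul : Q → Q → Q
  zero : Q → Q
  one : Q
  neg : Q → Q
  inv : Q → Q
  add_comm : ∀ a b, add a b = add b a
  mul_comm : ∀ a b, mul a b = mul b a
  add_assoc : ∀ a b c, (add a b).bind (fun x => add x c) = (add b c).bind (fun x => add a x)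
  mul_assoc : ∀ a b c, mul (mul a b) c = mul a (mul b c)
  left_distrib : ∀ a b c, (add b c).map (mul a) = add (mul a b) (mul a c)
  add_zero : ∀ a, add a (zero a) = some a
  zero_unique : ∀ a z, add a z = some a → z = zero a
  mul_one : ∀ a, mul a one = a
  add_neg : ∀ a, add a (neg a) = some (zero a)
  mul_inv : ∀ a, (¬ ∃ b, a = zero b) → mul a (inv a) = one
  nontrivial : ∀ a b, a = zero b → ∃ c, (¬ ∃ d, c = zero d) ∧ a = zero c

namespace PAF
variable {Q : Type*} (F : PAF Q)

/-- `a` is a zero element. -/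
def IsZero (a : Q) : Prop := ∃ b, a = F.zero b

/-- `a` and `b` are summable (their sum is defined). -/
def Summable (a b : Q) : Prop := (F.add a b).isSome

/-- `a` is dimensionless iff it is summable with `1`. -/
def Dimensionless (a : Q) : Prop := F.Summable a F.one

/-- `n`-th power via the total multiplication. -/
def pow (a : Q) : ℕ → Q
  | 0 => F.one
  | n + 1 => F.mul a (pow a n)

end PAF

/-! Distributivity and the uniqueness of zeros give `x × 0_e = 0_(x × e)`, so every multiple of a zero
element is a zero element. Conversely, if `a` is not a zero element then `b = a⁻¹ × (a × b)` is such a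
multiple whenever `a × b` is a zero element. -/

namespace PAF

variable {Q : Type*} (F : PAF Q)

theorem mul_zero (x e : Q) : F.mul x (F.zero e) = F.zero (F.mul x e) := by
  have h := F.left_distrib x e (F.zero e)
  rw [F.add_zero] at h
  exact F.zero_unique _ _ h.symm

theorem isZero_mul_right (a : Q) {b : Q} (hb : F.IsZero b) : F.IsZero (F.mul a b) := by
  obtain ⟨e, rfl⟩ := hb
  exact ⟨F.mul a e, F.mul_zero a e⟩

theorem isZero_mul_left {a : Q} (b : Q) (ha : F.IsZero a) : F.IsZero (F.mul a b) := by
  rw [F.mul_comm]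
  exact F.isZero_mul_right b ha

theorem inv_mul_cancel_left {a : Q} (ha : ¬ F.IsZero a) (b : Q) :
    F.mul (F.inv a) (F.mul a b) = b := by
  rw [← F.mul_assoc, F.mul_comm (F.inv a), F.mul_inv a ha, F.mul_comm, F.mul_one]

end PAF

/-- No zero divisors: `a × b` is a zero element iff `a` or `b` is. -/
theorem no_zero_divisors {Q : Type*} (F : PAF Q) (a b : Q) :
    F.IsZero (F.mul a b) ↔ F.IsZero a ∨ F.IsZero b := by
  refine ⟨fun hab => ?_, fun h => h.elim (F.isZero_mul_left b) (F.isZero_mul_right a)⟩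
  by_cases ha : F.IsZero a
  · exact Or.inl ha
  · right
    rw [← F.inv_mul_cancel_left ha b]
    exact F.isZero_mul_right _ hab
end

section
/- Let F be a partially additive field satisfying: (1) for all n ≥ 1, dimensionful elements have dimensionful n-th powers, and (2) for all n ≥ 1 and all summable non-zero dimensionful b, b', if b has an n-th root then so does b'. Then F admits a coherent unit system, i.e., a subgroup U of the multiplicative group of non-zero elements containing exactly one element from each summability equivalence class. -/
/-! ### Auxiliary lemmas about partially additive fields -/

namespace PAF
variable {Q : Type*} (F : PAF Q)

lemma zero_eq_mul (a : Q) : F.zero a = F.mul a (F.zero F.one) := by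
  have h := F.left_distrib a F.one (F.zero F.one)
  rw [F.add_zero F.one] at h
  simp only [Option.map_some] at h
  have h2 := F.zero_unique (F.mul a F.one) _ h.symm
  rw [F.mul_one] at h2
  exact h2.symm

lemma summable_iff_zero_eq {a b : Q} : F.Summable a b ↔ F.zero a = F.zero b := by
  constructor
  · intro h
    obtain ⟨s, hs⟩ := Option.isSome_iff_exists.1 h
    have hb : F.zero b = F.zero s := by
      have h1 := F.add_assoc a b (F.zero b)
      rw [hs, F.add_zero] at h1
      simp only [Option.bind_some] at h1
      rw [hs] at h1
      exact F.zero_unique s _ h1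
    have ha : F.zero a = F.zero s := by
      have hs' : F.add b a = some s := by rw [F.add_comm]; exact hs
      have h1 := F.add_assoc b a (F.zero a)
      rw [hs', F.add_zero] at h1
      simp only [Option.bind_some] at h1
      rw [hs'] at h1
      exact F.zero_unique s _ h1
    rw [ha, hb]
  · intro h
    have h1 := F.add_assoc (F.neg a) a b
    rw [F.add_comm (F.neg a) a, F.add_neg] at h1
    simp only [Option.bind_some] at h1
    rw [h, F.add_comm (F.zero b) b, F.add_zero] at h1
    rw [Summable]
    cases hab : F.add a b with
    | none => rw [hab] at h1; simp at h1
    | some s => simp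

lemma zero_zero (a : Q) : F.zero (F.zero a) = F.zero a := by
  have h : F.Summable a (F.zero a) := by rw [Summable, F.add_zero]; rfl
  exact (F.summable_iff_zero_eq.1 h).symm

lemma isZero_mul {a : Q} (h : F.IsZero a) (x : Q) : F.IsZero (F.mul a x) := by
  obtain ⟨e, rfl⟩ := h
  refine ⟨F.mul e x, ?_⟩
  rw [F.zero_eq_mul e, F.mul_assoc e _ x, F.mul_comm (F.zero F.one) x, ← F.mul_assoc e x,
    ← F.zero_eq_mul]

lemma one_not_isZero : ¬ F.IsZero F.one := by
  rintro ⟨e, he⟩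
  have hall : ∀ x : Q, F.IsZero x := fun x => by
    have hx : x = F.mul F.one x := by rw [F.mul_comm, F.mul_one]
    rw [hx, he]
    exact F.isZero_mul ⟨e, rfl⟩ x
  obtain ⟨c, hc, _⟩ := F.nontrivial F.one e he
  exact hc (hall c)

lemma mul_inv_mul {a b : Q} (ha : ¬ F.IsZero a) (hb : ¬ F.IsZero b) :
    F.mul (F.mul a b) (F.mul (F.inv b) (F.inv a)) = F.one := by
  rw [F.mul_assoc a b, ← F.mul_assoc b (F.inv b), F.mul_inv b hb, F.mul_comm F.one,
    F.mul_one, F.mul_inv a ha]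

lemma mul_nonzero {a b : Q} (ha : ¬ F.IsZero a) (hb : ¬ F.IsZero b) :
    ¬ F.IsZero (F.mul a b) := by
  intro h
  apply F.one_not_isZero
  rw [← F.mul_inv_mul ha hb]
  exact F.isZero_mul h _

lemma inv_nonzero {a : Q} (ha : ¬ F.IsZero a) : ¬ F.IsZero (F.inv a) := by
  intro h
  apply F.one_not_isZero
  rw [← F.mul_inv a ha, F.mul_comm]
  exact F.isZero_mul h _

/-- The commutative group of non-zero elements. -/
def grp : CommGroup {a : Q // ¬ F.IsZero a} where
  mul x y := ⟨F.mul x.1 y.1, F.mul_nonzero x.2 y.2⟩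
  one := ⟨F.one, F.one_not_isZero⟩
  inv x := ⟨F.inv x.1, F.inv_nonzero x.2⟩
  mul_assoc x y z := Subtype.ext (F.mul_assoc x.1 y.1 z.1)
  one_mul x := Subtype.ext (show F.mul F.one x.1 = x.1 by rw [F.mul_comm, F.mul_one])
  mul_one x := Subtype.ext (F.mul_one x.1)
  inv_mul_cancel x := Subtype.ext (show F.mul (F.inv x.1) x.1 = F.one by
    rw [F.mul_comm]; exact F.mul_inv x.1 x.2)
  mul_comm x y := Subtype.ext (F.mul_comm x.1 y.1)

end PAF

attribute [local instance] PAF.grp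

namespace PAF
variable {Q : Type*} (F : PAF Q)

lemma pow_eq (x : {a : Q // ¬ F.IsZero a}) : ∀ n : ℕ, (x ^ n).1 = F.pow x.1 n
  | 0 => by rw [pow_zero]; rfl
  | n + 1 => by
      rw [pow_succ]
      show F.mul (x ^ n).1 x.1 = F.mul x.1 (F.pow x.1 n)
      rw [F.mul_comm, pow_eq x n]

lemma dimensionless_iff (a : Q) :
    F.Dimensionless a ↔ F.mul a (F.zero F.one) = F.zero F.one := by
  rw [Dimensionless, F.summable_iff_zero_eq]
  conv_lhs => rw [F.zero_eq_mul a]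

end PAF

/-- A divisible subgroup of a commutative group has a complement. -/
theorem divisible_compl {A : Type*} [CommGroup A] (D : Subgroup A)
    (hdiv : ∀ d ∈ D, ∀ n : ℕ, 0 < n → ∃ e ∈ D, e ^ n = d) :
    ∃ U : Subgroup A, U ⊓ D = ⊥ ∧ U ⊔ D = ⊤ := by
  classical
  obtain ⟨U, hU⟩ := zorn_le₀ {U : Subgroup A | U ⊓ D = ⊥} (by
    intro c hc hchain
    rcases c.eq_empty_or_nonempty with rfl | hne
    · exact ⟨⊥, by simp, fun z hz => absurd hz (Set.notMem_empty z)⟩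
    · refine ⟨sSup c, ?_, fun z hz => le_sSup hz⟩
      rw [Set.mem_setOf_eq, eq_bot_iff]
      intro x hx0
      obtain ⟨hx1, hx2⟩ := Subgroup.mem_inf.1 hx0
      rw [Subgroup.mem_sSup_of_directedOn hne hchain.directedOn] at hx1
      obtain ⟨s, hs, hxs⟩ := hx1
      have hm : x ∈ s ⊓ D := Subgroup.mem_inf.2 ⟨hxs, hx2⟩
      rw [hc hs] at hm
      exact hm)
  refine ⟨U, hU.1, ?_⟩
  rw [eq_top_iff]
  intro x _
  by_contra hx
  by_cases hS : ∃ k : ℕ, 0 < k ∧ x ^ k ∈ U ⊔ D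
  · -- minimal k with x ^ k ∈ U ⊔ D
    have hk0 : 0 < Nat.find hS := (Nat.find_spec hS).1
    have hkW : x ^ (Nat.find hS) ∈ U ⊔ D := (Nat.find_spec hS).2
    set k := Nat.find hS with hkdef
    have hkmin : ∀ r, r < k → ¬(0 < r ∧ x ^ r ∈ U ⊔ D) := fun r hr => Nat.find_min hS hr
    have hkW' := hkW
    rw [Subgroup.mem_sup] at hkW'
    obtain ⟨u, hu, d, hd, hud⟩ := hkW'
    obtain ⟨e, he, hek⟩ := hdiv d hd k hk0
    set y := x * e⁻¹ with hy
    have hyk : y ^ k = u := by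
      rw [hy, mul_pow, inv_pow, hek, ← hud, mul_inv_cancel_right]
    have hyW : y ∉ U ⊔ D := by
      intro h
      apply hx
      have hxy : x = y * e := by rw [hy, inv_mul_cancel_right]
      rw [hxy]
      exact mul_mem h (Subgroup.mem_sup_right he)
    have hU' : (U ⊔ Subgroup.zpowers y) ⊓ D = ⊥ := by
      rw [eq_bot_iff]
      intro t ht0
      obtain ⟨ht1, ht2⟩ := Subgroup.mem_inf.1 ht0
      rw [Subgroup.mem_sup] at ht1
      obtain ⟨u₁, hu₁, v, hv, huv⟩ := ht1
      obtain ⟨m, rfl⟩ := hv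
      have hymU : y ^ m ∈ U := by
        rcases eq_or_ne m 0 with rfl | hm
        · simpa using one_mem U
        · have hymW : y ^ m ∈ U ⊔ D := by
            have h2 : y ^ m = u₁⁻¹ * t := by rw [← huv, inv_mul_cancel_left]
            rw [h2]
            exact mul_mem (Subgroup.mem_sup_left (inv_mem hu₁)) (Subgroup.mem_sup_right ht2)
          have hynW : y ^ (m.natAbs) ∈ U ⊔ D := by
            have h3 : y ^ (m.natAbs : ℤ) ∈ U ⊔ D := by
              rcases Int.natAbs_eq m with h | h
              · rw [← h]; exact hymW
              · rw [show ((m.natAbs : ℤ)) = -m from by omega, zpow_neg]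
                exact inv_mem hymW
            rwa [zpow_natCast] at h3
          have hxnW : x ^ (m.natAbs) ∈ U ⊔ D := by
            have h4 : x ^ m.natAbs = y ^ m.natAbs * e ^ m.natAbs := by
              rw [← mul_pow, hy, inv_mul_cancel_right]
            rw [h4]
            exact mul_mem hynW (Subgroup.mem_sup_right (pow_mem he _))
          have hr : m.natAbs % k = 0 := by
            by_contra hr0
            refine hkmin _ (Nat.mod_lt _ hk0) ⟨Nat.pos_of_ne_zero hr0, ?_⟩
            have hdiv0 : (x ^ k) ^ (m.natAbs / k) * x ^ (m.natAbs % k) = x ^ m.natAbs := by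
              rw [← pow_mul, ← pow_add, Nat.div_add_mod]
            have hdiv' : x ^ (m.natAbs % k) =
                ((x ^ k) ^ (m.natAbs / k))⁻¹ * x ^ m.natAbs := by
              rw [← hdiv0, inv_mul_cancel_left]
            rw [hdiv']
            exact mul_mem (inv_mem (pow_mem hkW _)) hxnW
          have hkm : (k : ℤ) ∣ m := by
            have hnat : (k : ℤ).natAbs ∣ m.natAbs := by
              rw [Int.natAbs_natCast]
              exact Nat.dvd_of_mod_eq_zero hr
            exact Int.natAbs_dvd_natAbs.1 hnat
          obtain ⟨q, hq⟩ := hkm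
          rw [hq, zpow_mul, zpow_natCast, hyk]
          exact zpow_mem hu q
      have hmem : t ∈ U ⊓ D := Subgroup.mem_inf.2 ⟨huv ▸ mul_mem hu₁ hymU, ht2⟩
      rw [hU.1] at hmem
      exact hmem
    have hle := hU.2 hU' le_sup_left
    exact hyW (Subgroup.mem_sup_left (hle (Subgroup.mem_sup_right (Subgroup.mem_zpowers y))))
  · push_neg at hS
    have hU' : (U ⊔ Subgroup.zpowers x) ⊓ D = ⊥ := by
      rw [eq_bot_iff]
      intro t ht0
      obtain ⟨ht1, ht2⟩ := Subgroup.mem_inf.1 ht0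
      rw [Subgroup.mem_sup] at ht1
      obtain ⟨u₁, hu₁, v, hv, huv⟩ := ht1
      obtain ⟨m, rfl⟩ := hv
      have hxmU : x ^ m ∈ U := by
        rcases eq_or_ne m 0 with rfl | hm
        · simpa using one_mem U
        · exfalso
          have hxmW : x ^ m ∈ U ⊔ D := by
            have h2 : x ^ m = u₁⁻¹ * t := by rw [← huv, inv_mul_cancel_left]
            rw [h2]
            exact mul_mem (Subgroup.mem_sup_left (inv_mem hu₁)) (Subgroup.mem_sup_right ht2)
          have hxnW : x ^ (m.natAbs) ∈ U ⊔ D := by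
            have h3 : x ^ (m.natAbs : ℤ) ∈ U ⊔ D := by
              rcases Int.natAbs_eq m with h | h
              · rw [← h]; exact hxmW
              · rw [show ((m.natAbs : ℤ)) = -m from by omega, zpow_neg]
                exact inv_mem hxmW
            rwa [zpow_natCast] at h3
          exact hS m.natAbs (Int.natAbs_pos.2 hm) hxnW
      have hmem : t ∈ U ⊓ D := Subgroup.mem_inf.2 ⟨huv ▸ mul_mem hu₁ hxmU, ht2⟩
      rw [hU.1] at hmem
      exact hmem
    have hle := hU.2 hU' le_sup_left
    exact hx (Subgroup.mem_sup_left (hle (Subgroup.mem_sup_right (Subgroup.mem_zpowers x))))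

/-- Under the two root conditions, a partially additive field admits a coherent unit system:
a subgroup of the multiplicative group of non-zero elements containing exactly one element
from each summability class. -/
theorem coherent_unit_system {Q : Type*} (F : PAF Q)
    (h1 : ∀ n : ℕ, 1 ≤ n → ∀ a : Q, ¬ F.Dimensionless a → ¬ F.Dimensionless (F.pow a n))
    (h2 : ∀ n : ℕ, 1 ≤ n → ∀ b b' : Q, ¬ F.Dimensionless b → ¬ F.Dimensionless b' →
      ¬ F.IsZero b → ¬ F.IsZero b' → F.Summable b b' →
      (∃ c : Q, F.pow c n = b) → ∃ c' : Q, F.pow c' n = b') :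
    ∃ inst : CommGroup {a : Q // ¬ F.IsZero a},
      letI := inst
      (∀ x y : {a : Q // ¬ F.IsZero a}, (x * y).1 = F.mul x.1 y.1) ∧
      ∃ U : Subgroup {a : Q // ¬ F.IsZero a},
        ∀ a : Q, ∃! u : {a : Q // ¬ F.IsZero a}, u ∈ U ∧ F.Summable a u.1 := by
  classical
  refine ⟨F.grp, fun x y => rfl, ?_⟩
  let D : Subgroup {a : Q // ¬ F.IsZero a} :=
    { carrier := {x | F.mul x.1 (F.zero F.one) = F.zero F.one}
      one_mem' := by show F.mul F.one (F.zero F.one) = F.zero F.one; rw [F.mul_comm, F.mul_one]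
      mul_mem' := by
        intro x y hx hy
        show F.mul (F.mul x.1 y.1) (F.zero F.one) = F.zero F.one
        rw [F.mul_assoc]
        show F.mul x.1 (F.mul y.1 (F.zero F.one)) = F.zero F.one
        rw [hy]; exact hx
      inv_mem' := by
        intro x hx
        show F.mul (F.inv x.1) (F.zero F.one) = F.zero F.one
        conv_lhs => rw [← hx]
        rw [← F.mul_assoc, F.mul_comm (F.inv x.1) x.1, F.mul_inv x.1 x.2, F.mul_comm,
          F.mul_one] }
  have hmemD : ∀ x : {a : Q // ¬ F.IsZero a}, x ∈ D ↔ F.Dimensionless x.1 := by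
    intro x
    rw [F.dimensionless_iff x.1]
    exact Iff.rfl
  have key : ∃ U : Subgroup {a : Q // ¬ F.IsZero a}, U ⊓ D = ⊥ ∧ U ⊔ D = ⊤ := by
    by_cases htop : ∀ x : {a : Q // ¬ F.IsZero a}, x ∈ D
    · exact ⟨⊥, by simp, by rw [bot_sup_eq]; exact (Subgroup.eq_top_iff' D).2 htop⟩
    · push_neg at htop
      obtain ⟨b, hbD⟩ := htop
      apply divisible_compl
      intro d hdD n hn
      have hbdim : ¬ F.Dimensionless b.1 := fun h => hbD ((hmemD b).2 h)
      have hdim1 : ¬ F.Dimensionless ((b ^ n).1) := by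
        rw [F.pow_eq]
        exact h1 n hn b.1 hbdim
      have hdim2 : ¬ F.Dimensionless ((b ^ n * d).1) := by
        intro hdim
        have hmem1 : b ^ n * d ∈ D := (hmemD _).2 hdim
        have hmem2 : b ^ n ∈ D := by
          have h5 : b ^ n = (b ^ n * d) * d⁻¹ := by rw [mul_inv_cancel_right]
          rw [h5]
          exact mul_mem hmem1 (inv_mem hdD)
        exact hdim1 ((hmemD _).1 hmem2)
      have hdd : F.mul d.1 (F.zero F.one) = F.zero F.one := hdD
      have hsum : F.Summable ((b ^ n).1) ((b ^ n * d).1) := by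
        apply F.summable_iff_zero_eq.2
        rw [F.zero_eq_mul ((b ^ n : {a : Q // ¬ F.IsZero a}) : Q),
          F.zero_eq_mul ((b ^ n * d : {a : Q // ¬ F.IsZero a}) : Q)]
        show F.mul (b ^ n).1 (F.zero F.one) = F.mul (F.mul (b ^ n).1 d.1) (F.zero F.one)
        rw [F.mul_assoc]
        show F.mul (b ^ n).1 (F.zero F.one) = F.mul (b ^ n).1 (F.mul d.1 (F.zero F.one))
        rw [hdd]
      obtain ⟨c, hc⟩ := h2 n hn ((b ^ n).1) ((b ^ n * d).1) hdim1 hdim2 (b ^ n).2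
        (b ^ n * d).2 hsum ⟨b.1, (F.pow_eq b n).symm⟩
      have hcnz : ¬ F.IsZero c := by
        intro hzc
        apply (b ^ n * d).2
        rw [← hc]
        obtain ⟨m, rfl⟩ : ∃ m, n = m + 1 := ⟨n - 1, by omega⟩
        show F.IsZero (F.mul c (F.pow c m))
        exact F.isZero_mul hzc _
      have hcc : (⟨c, hcnz⟩ : {a : Q // ¬ F.IsZero a}) ^ n = b ^ n * d :=
        Subtype.ext (by rw [F.pow_eq]; exact hc)
      refine ⟨(⟨c, hcnz⟩ : {a : Q // ¬ F.IsZero a}) * b⁻¹, ?_, ?_⟩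
      · -- membership in D
        by_contra hne
        have hnd : ¬ F.Dimensionless ((⟨c, hcnz⟩ : {a : Q // ¬ F.IsZero a}) * b⁻¹).1 :=
          fun h => hne ((hmemD _).2 h)
        have h6 := h1 n hn _ hnd
        rw [← F.pow_eq] at h6
        have h7 : ((⟨c, hcnz⟩ : {a : Q // ¬ F.IsZero a}) * b⁻¹) ^ n = d := by
          rw [mul_pow, inv_pow, hcc, mul_comm (b ^ n) d, mul_inv_cancel_right]
        rw [h7] at h6
        exact h6 ((hmemD d).1 hdD)
      · rw [mul_pow, inv_pow, hcc, mul_comm (b ^ n) d, mul_inv_cancel_right]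
  obtain ⟨U, hUD, hUsup⟩ := key
  refine ⟨U, fun a => ?_⟩
  obtain ⟨c, hcnz, hzc⟩ : ∃ c, ¬ F.IsZero c ∧ F.zero c = F.zero a := by
    by_cases h : F.IsZero a
    · obtain ⟨bb, hbb⟩ := h
      obtain ⟨c, hc1, hc2⟩ := F.nontrivial a bb hbb
      refine ⟨c, hc1, ?_⟩
      rw [hc2]
      exact (F.zero_zero c).symm
    · exact ⟨a, h, rfl⟩
  have hxtop : (⟨c, hcnz⟩ : {a : Q // ¬ F.IsZero a}) ∈ U ⊔ D := by
    rw [hUsup]; trivial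
  rw [Subgroup.mem_sup] at hxtop
  obtain ⟨u, hu, d, hdD, hud⟩ := hxtop
  have hdd : F.mul d.1 (F.zero F.one) = F.zero F.one := hdD
  have h7 : c = F.mul u.1 d.1 := (congrArg Subtype.val hud).symm
  have hzu : F.zero c = F.zero u.1 := by
    rw [F.zero_eq_mul c, F.zero_eq_mul (u : Q), h7, F.mul_assoc]
    show F.mul u.1 (F.mul d.1 (F.zero F.one)) = F.mul u.1 (F.zero F.one)
    rw [hdd]
  have hsum : F.Summable a u.1 := F.summable_iff_zero_eq.2 (by rw [← hzc]; exact hzu)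
  refine ⟨u, ⟨hu, hsum⟩, ?_⟩
  rintro v ⟨hvU, hvsum⟩
  have h8 := F.summable_iff_zero_eq.1 hvsum
  have hzv : F.zero v.1 = F.zero u.1 := by rw [← h8, ← hzc]; exact hzu
  have hmemvd : v⁻¹ * u ∈ D := by
    show F.mul (F.mul (F.inv v.1) u.1) (F.zero F.one) = F.zero F.one
    rw [F.mul_assoc]
    have h9 : F.mul u.1 (F.zero F.one) = F.mul v.1 (F.zero F.one) := by
      rw [← F.zero_eq_mul (u : Q), ← F.zero_eq_mul (v : Q)]; exact hzv.symm
    show F.mul (F.inv v.1) (F.mul u.1 (F.zero F.one)) = F.zero F.one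
    rw [h9, ← F.mul_assoc, F.mul_comm (F.inv v.1) v.1, F.mul_inv v.1 v.2, F.mul_comm,
      F.mul_one]
  have hmm : v⁻¹ * u ∈ U ⊓ D := Subgroup.mem_inf.2 ⟨mul_mem (inv_mem hvU) hu, hmemvd⟩
  rw [hUD] at hmm
  exact inv_mul_eq_one.1 (Subgroup.mem_bot.1 hmm)
end
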